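/- arXiv:1310.1804 — 7 statements merged into one kernel-verified Lean document; each statement's English description precedes it below -/
import Mathlib

section
/- For every submonoid S of ℤ, there exist a topological space X and a bijection f : X → X such that {n ∈ ℤ | fⁿ is continuous} = S. -/
theorem stmt_1 (S : AddSubmonoid ℤ) :
    ∃ (X : Type) (_ : TopologicalSpace X) (f : Equiv.Perm X),
      {n : ℤ | Continuous ⇑(f ^ n)} = (S : Set ℤ) := by
  classical
  set gens : Set (Set ℤ) := {U | ∃ s ∈ S, U = Set.Ici (-s)} with hgens
  letI t : TopologicalSpace ℤ := TopologicalSpace.generateFrom gens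
  refine ⟨ℤ, t, Equiv.addRight 1, ?_⟩
  have hpow : ∀ (n : ℤ), ⇑((Equiv.addRight (1:ℤ)) ^ n) = fun x => x + n := by
    intro n; ext x; simp
  -- characterization of opens
  have hopen : ∀ U : Set ℤ, TopologicalSpace.GenerateOpen gens U →
      U = Set.univ ∨ ∀ x ∈ U, ∃ s ∈ S, x ∈ Set.Ici (-s) ∧ Set.Ici (-s) ⊆ U := by
    intro U hU
    induction hU with
    | basic V hV =>
        obtain ⟨s, hs, rfl⟩ := hV
        exact Or.inr fun x hx => ⟨s, hs, hx, le_refl _⟩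
    | univ => exact Or.inl rfl
    | inter V W hV hW ihV ihW =>
        rcases ihV with rfl | ihV
        · rcases ihW with rfl | ihW
          · exact Or.inl (by simp)
          · exact Or.inr fun x hx => by
              obtain ⟨s, hs, hxs, hsub⟩ := ihW x hx.2
              exact ⟨s, hs, hxs, fun y hy => ⟨trivial, hsub hy⟩⟩
        · rcases ihW with rfl | ihW
          · exact Or.inr fun x hx => by
              obtain ⟨s, hs, hxs, hsub⟩ := ihV x hx.1
              exact ⟨s, hs, hxs, fun y hy => ⟨hsub hy, trivial⟩⟩
          · refine Or.inr fun x hx => ?_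
            obtain ⟨s, hs, hxs, hsubV⟩ := ihV x hx.1
            obtain ⟨u, hu, hxu, hsubW⟩ := ihW x hx.2
            rcases le_total s u with h | h
            · exact ⟨s, hs, hxs, fun y hy =>
                ⟨hsubV hy, hsubW (le_trans (neg_le_neg h) hy)⟩⟩
            · exact ⟨u, hu, hxu, fun y hy =>
                ⟨hsubV (le_trans (neg_le_neg h) hy), hsubW hy⟩⟩
    | sUnion 𝒮 h ih =>
        by_cases hcov : Set.univ ∈ 𝒮
        · exact Or.inl (Set.eq_univ_of_univ_subset (Set.subset_sUnion_of_mem hcov))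
        · refine Or.inr fun x hx => ?_
          obtain ⟨V, hV, hxV⟩ := hx
          rcases ih V hV with rfl | ihV
          · exact absurd hV hcov
          · obtain ⟨s, hs, hxs, hsub⟩ := ihV x hxV
            exact ⟨s, hs, hxs, fun y hy => Set.subset_sUnion_of_mem hV (hsub hy)⟩
  ext n
  simp only [Set.mem_setOf_eq, SetLike.mem_coe]
  constructor
  · intro hc
    -- Ici 0 is a generator (s = 0), its preimage Ici (-n) is open
    have h0 : TopologicalSpace.GenerateOpen gens (Set.Ici (0:ℤ)) :=
      TopologicalSpace.GenerateOpen.basic _ ⟨0, S.zero_mem, by simp⟩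
    have hpre : IsOpen ((fun x => x + n) ⁻¹' Set.Ici (0:ℤ)) := by
      have := hc.isOpen_preimage _ h0
      rwa [hpow n] at this
    have heq : ((fun x : ℤ => x + n) ⁻¹' Set.Ici (0:ℤ)) = Set.Ici (-n) := by
      ext x; simp [Set.mem_Ici, neg_le_iff_add_nonneg]
    rw [heq] at hpre
    rcases hopen _ hpre with h | h
    · exact absurd (h ▸ Set.mem_univ (-n - 1)) (by simp [Set.mem_Ici])
    · obtain ⟨s, hs, hxs, hsub⟩ := h (-n) (Set.self_mem_Ici)
      have h1 : -s ≤ -n := hxs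
      have h2 : -n ≤ -s := hsub Set.self_mem_Ici
      have : s = n := by omega
      exact this ▸ hs
  · intro hn
    rw [hpow n]
    apply continuous_generateFrom_iff.mpr
    rintro V ⟨s, hs, rfl⟩
    have heq : ((fun x : ℤ => x + n) ⁻¹' Set.Ici (-s)) = Set.Ici (-(s + n)) := by
      ext x; simp [Set.mem_Ici]; omega
    rw [heq]
    exact TopologicalSpace.GenerateOpen.basic _ ⟨s + n, S.add_mem hs hn, rfl⟩
end

section
/- A subset S of ℤ is realizable (i.e., S = {n ∈ ℤ | fⁿ is continuous} for some topological space X and bijection f : X → X) if and only if S is a submonoid of ℤ. -/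
/-!
The continuity set of a bijection contains `0` and is closed under addition since
`f ^ (a + b) = f ^ a ∘ f ^ b`. Conversely, given a submonoid `S`, topologize `ℤ` so that the
nonempty open sets are exactly the supersets of `S`. A translation `x ↦ x + n` is then continuous
iff it maps `S` into itself, i.e. iff `n ∈ S`, so the successor map realizes `S`.
-/

open Topology

section ContinuousZPow

variable {X : Type*} [TopologicalSpace X]

theorem Equiv.Perm.continuous_zpow_zero (f : Equiv.Perm X) : Continuous ⇑(f ^ (0 : ℤ)) := by
  simpa using continuous_id

theorem Equiv.Perm.continuous_zpow_add {f : Equiv.Perm X} {a b : ℤ}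
    (ha : Continuous ⇑(f ^ a)) (hb : Continuous ⇑(f ^ b)) : Continuous ⇑(f ^ (a + b)) := by
  rw [zpow_add, Equiv.Perm.coe_mul]
  exact ha.comp hb

end ContinuousZPow

abbrev includedSetTopology {α : Type*} (S : Set α) : TopologicalSpace α where
  IsOpen U := U.Nonempty → S ⊆ U
  isOpen_univ _ := Set.subset_univ S
  isOpen_inter _ _ hU hV := fun ⟨x, hxU, hxV⟩ =>
    Set.subset_inter (hU ⟨x, hxU⟩) (hV ⟨x, hxV⟩)
  isOpen_sUnion _ h := fun ⟨x, U, hU, hxU⟩ =>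
    (h U hU ⟨x, hxU⟩).trans (Set.subset_sUnion_of_mem hU)

namespace includedSetTopology

variable {α : Type*} {S : Set α} {f : α → α}

theorem isOpen_iff {U : Set α} : IsOpen[includedSetTopology S] U ↔ (U.Nonempty → S ⊆ U) :=
  Iff.rfl

theorem continuous_of_mapsTo (hf : Set.MapsTo f S S) :
    Continuous[includedSetTopology S, includedSetTopology S] f := by
  refine continuous_def.mpr fun U hU ⟨x, hx⟩ => ?_
  exact hf.mono_right (isOpen_iff.mp hU ⟨f x, hx⟩)

theorem mapsTo_of_continuous (hf : Continuous[includedSetTopology S, includedSetTopology S] f)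
    (hS : (f ⁻¹' S).Nonempty) : Set.MapsTo f S S :=
  isOpen_iff.mp (continuous_def.mp hf S (isOpen_iff.mpr fun _ => subset_rfl)) hS

theorem continuous_add_right_iff {G : Type*} [AddGroup G] {M : AddSubmonoid G} {g : G} :
    Continuous[includedSetTopology (M : Set G), includedSetTopology (M : Set G)] (· + g) ↔
      g ∈ M := by
  constructor
  · intro hc
    have hneg : -g ∈ (· + g) ⁻¹' (M : Set G) := by simp [M.zero_mem]
    simpa using mapsTo_of_continuous hc ⟨-g, hneg⟩ M.zero_mem
  · exact fun hg => continuous_of_mapsTo fun x hx => M.add_mem hx hg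

end includedSetTopology

theorem stmt_2 (S : Set ℤ) :
    (∃ (X : Type) (_ : TopologicalSpace X) (f : Equiv.Perm X),
      {n : ℤ | Continuous ⇑(f ^ n)} = S) ↔
    ((0 : ℤ) ∈ S ∧ ∀ a ∈ S, ∀ b ∈ S, a + b ∈ S) := by
  constructor
  · rintro ⟨X, _, f, rfl⟩
    exact ⟨f.continuous_zpow_zero, fun _ ha _ hb => Equiv.Perm.continuous_zpow_add ha hb⟩
  · rintro ⟨h0, hadd⟩
    let M : AddSubmonoid ℤ := ⟨⟨S, fun {a b} ha hb => hadd a ha b hb⟩, h0⟩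
    refine ⟨ℤ, includedSetTopology S, Equiv.addRight 1, Set.ext fun n => ?_⟩
    have hpow : ⇑(Equiv.addRight (1 : ℤ) ^ n) = (· + n) := by
      ext x
      simp
    rw [Set.mem_ofPred_eq, hpow]
    exact includedSetTopology.continuous_add_right_iff (M := M)
end

section
/- Let X be the disjoint union of countably many half-open intervals [0,1). Then for every submonoid S of ℤ there exists a bijection f : X → X such that {n ∈ ℤ | fⁿ is continuous} = S. -/
/-!
Lay copies of `Y = [0,1)` along a chain indexed by time `t ∈ ℤ`: at a time `t ∈ S` the chain
passes through one copy of `Y`, at a time `t ∉ S` through two copies, into which `Y` is cut by a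
continuous bijection `Bool × Y ≃ Y` such as `(b, y) ↦ (y + b) / 2`. Let `f` move every point one
step along the chain. On a single copy, `fⁿ` is continuous unless it has to cut that copy, which
happens exactly when the copy sits at a time `t ∈ S` with `t + n ∉ S`. So `fⁿ` is continuous iff
`S + n ⊆ S`, which for a submonoid means `n ∈ S`. Finally the countably many copies are relabelled
by `ℤ`.
-/

open Function

noncomputable section Chain

variable {Y : Type*} (e : Bool × Y ≃ Y) (S : Set ℤ)

abbrev ChainIndex : Type := {t // t ∈ S} ⊕ Bool × {t // t ∉ S}

open Classical in
def chainEquiv : ℤ × Y ≃ ChainIndex S × Y where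
  toFun p :=
    if h : p.1 ∈ S then (.inl ⟨p.1, h⟩, p.2)
    else (.inr ((e.symm p.2).1, ⟨p.1, h⟩), (e.symm p.2).2)
  invFun
    | (.inl t, y) => (t, y)
    | (.inr (b, t), y) => (t, e (b, y))
  left_inv := by
    rintro ⟨t, y⟩
    by_cases h : t ∈ S <;> simp [h]
  right_inv := by
    rintro ⟨⟨t, ht⟩ | ⟨b, t, ht⟩, y⟩ <;> simp [ht]

variable {S}

lemma chainEquiv_of_mem {t : ℤ} (h : t ∈ S) (y : Y) :
    chainEquiv e S (t, y) = (.inl ⟨t, h⟩, y) := by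
  simp [chainEquiv, h]

lemma chainEquiv_of_notMem {t : ℤ} (h : t ∉ S) (y : Y) :
    chainEquiv e S (t, y) = (.inr ((e.symm y).1, ⟨t, h⟩), (e.symm y).2) := by
  simp [chainEquiv, h]

variable (S)

def chainShift : Equiv.Perm (ChainIndex S × Y) :=
  (chainEquiv e S).permCongr ((Equiv.addRight 1).prodCongr (Equiv.refl Y))

lemma prodCongr_addRight_one_zpow (n : ℤ) :
    ((Equiv.addRight (1 : ℤ)).prodCongr (Equiv.refl Y)) ^ n =
      (Equiv.addRight n).prodCongr (Equiv.refl Y) := by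
  induction n using Int.induction_on with
  | zero => ext <;> simp
  | succ n ih =>
    rw [zpow_add_one, ih]
    ext ⟨t, y⟩
    · simp only [Equiv.Perm.coe_mul, comp_apply, Equiv.prodCongr_apply, Prod.map_fst,
        Equiv.coe_addRight]
      ring
    · rfl
  | pred n ih =>
    rw [zpow_sub_one, ih]
    ext ⟨t, y⟩
    · simp only [Equiv.Perm.coe_mul, comp_apply, Equiv.prodCongr_apply, Prod.map_fst,
        Equiv.coe_addRight, Equiv.Perm.coe_inv, Equiv.prodCongr_symm, Equiv.addRight_symm]
      ring
    · rfl

lemma chainShift_zpow_apply (n : ℤ) (p : ChainIndex S × Y) :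
    (chainShift e S ^ n) p =
      chainEquiv e S (((chainEquiv e S).symm p).1 + n, ((chainEquiv e S).symm p).2) := by
  rw [chainShift, ← Equiv.permCongrHom_coe, ← map_zpow, Equiv.permCongrHom_coe,
    prodCongr_addRight_one_zpow]
  rfl

lemma chainShift_zpow_inl (n : ℤ) (t : {t // t ∈ S}) (y : Y) :
    (chainShift e S ^ n) (.inl t, y) = chainEquiv e S (t + n, y) :=
  chainShift_zpow_apply e S n _

lemma chainShift_zpow_inr (n : ℤ) (b : Bool) (t : {t // t ∉ S}) (y : Y) :
    (chainShift e S ^ n) (.inr (b, t), y) = chainEquiv e S (t + n, e (b, y)) :=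
  chainShift_zpow_apply e S n _

lemma continuous_chainShift_zpow_iff [TopologicalSpace Y] [PreconnectedSpace Y] [Nonempty Y]
    (he : Continuous e) (n : ℤ) :
    Continuous ⇑(chainShift e S ^ n) ↔ ∀ t ∈ S, t + n ∈ S := by
  refine ⟨fun h t ht => by_contra fun hn => ?_, fun hS => ?_⟩
  · have hslice : Continuous fun y => ((chainShift e S ^ n) (.inl ⟨t, ht⟩, y)).1 := by fun_prop
    obtain ⟨y⟩ := ‹Nonempty Y›
    have := PreconnectedSpace.constant ‹_› hslice (x := e (false, y)) (y := e (true, y))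
    simp [chainShift_zpow_inl, chainEquiv_of_notMem e hn] at this
  · refine continuous_prod_of_discrete_left.mpr ?_
    rintro (⟨t, ht⟩ | ⟨b, t, ht⟩)
    · simp only [chainShift_zpow_inl, chainEquiv_of_mem e (hS t ht)]
      fun_prop
    · by_cases hn : t + n ∈ S
      · simp only [chainShift_zpow_inr, chainEquiv_of_mem e hn]
        fun_prop
      · simp only [chainShift_zpow_inr, chainEquiv_of_notMem e hn, Equiv.symm_apply_apply]
        fun_prop

end Chain

open Classical in
instance (S : Set ℤ) : Infinite (ChainIndex S) :=
  Infinite.of_injective (Sum.map id (Prod.mk false) ∘ (Equiv.sumCompl (· ∈ S)).symm)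
    ((Sum.map_injective.mpr ⟨injective_id, Prod.mk_right_injective false⟩).comp
      (Equiv.injective _))

lemma Homeomorph.continuous_permCongr_iff {X Z : Type*} [TopologicalSpace X]
    [TopologicalSpace Z] (h : X ≃ₜ Z) (p : Equiv.Perm X) :
    Continuous ⇑(h.toEquiv.permCongr p) ↔ Continuous ⇑p :=
  h.comp_continuous_iff.trans h.symm.comp_continuous_iff'

theorem exists_perm_setOf_continuous_zpow_eq {Y : Type*} [TopologicalSpace Y]
    [PreconnectedSpace Y] [Nonempty Y] (e : Bool × Y ≃ Y) (he : Continuous e) {S : Set ℤ}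
    (h0 : 0 ∈ S) (hadd : ∀ a ∈ S, ∀ b ∈ S, a + b ∈ S) :
    ∃ f : Equiv.Perm (ℤ × Y), {n : ℤ | Continuous ⇑(f ^ n)} = S := by
  obtain ⟨σ⟩ : Nonempty (ChainIndex S ≃ ℤ) := nonempty_equiv_of_countable
  let h : ChainIndex S × Y ≃ₜ ℤ × Y := σ.toHomeomorphOfDiscrete.prodCongr (.refl Y)
  refine ⟨h.toEquiv.permCongr (chainShift e S), Set.ext fun n => ?_⟩
  rw [Set.mem_ofPred_eq, ← Equiv.permCongrHom_coe, ← map_zpow, Equiv.permCongrHom_coe,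
    h.continuous_permCongr_iff, continuous_chainShift_zpow_iff e S he]
  exact ⟨fun hS => by simpa using hS 0 h0, fun hn t ht => hadd t ht n hn⟩

noncomputable def halvingEquiv : Bool × Set.Ico (0 : ℝ) 1 ≃ Set.Ico (0 : ℝ) 1 where
  toFun p := ⟨(p.2 + p.1.toNat) / 2, by
    obtain ⟨b, y, hy₀, hy₁⟩ := p
    cases b <;> constructor <;> norm_num <;> linarith⟩
  invFun x :=
    if h : 2 * (x : ℝ) < 1 then (false, ⟨2 * x, by constructor <;> linarith [x.2.1]⟩)
    else (true, ⟨2 * x - 1, by constructor <;> linarith [x.2.2]⟩)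
  left_inv := by
    rintro ⟨b, y, hy₀, hy₁⟩
    cases b
    · have hy : 2 * (y / 2) = y := by ring
      simp [hy, hy₁]
    · have hy : 2 * ((y + 1) / 2) = y + 1 := by ring
      simp [hy, not_lt.mpr hy₀]
  right_inv := by
    rintro ⟨x, hx₀, hx₁⟩
    by_cases h : 2 * x < 1 <;> simp [h]

lemma continuous_halvingEquiv : Continuous halvingEquiv :=
  continuous_prod_of_discrete_left.mpr fun _ => by
    simp only [halvingEquiv, Equiv.coe_fn_mk]
    fun_prop

theorem stmt_3 (S : Set ℤ) (h0 : (0 : ℤ) ∈ S)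
    (hadd : ∀ a ∈ S, ∀ b ∈ S, a + b ∈ S) :
    ∃ f : Equiv.Perm (ℤ × Set.Ico (0 : ℝ) 1),
      {n : ℤ | Continuous ⇑(f ^ n)} = S :=
  haveI := Subtype.preconnectedSpace (isPreconnected_Ico (a := (0 : ℝ)) (b := 1))
  exists_perm_setOf_continuous_zpow_eq halvingEquiv continuous_halvingEquiv h0 hadd
end

section
/- Let G be a group and S a submonoid of G. Then there exist a topological space X and a group homomorphism φ : G → B(X) into the group of bijections of X such that φ is injective and, for every g ∈ G, the bijection φ(g) is continuous if and only if g ∈ S. -/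
/-!
Topologize `G` so that the open sets are `∅` and the supersets of `S`. A surjection of such a
space is then continuous exactly when it maps `S` into `S`, and left multiplication by `g` maps
the submonoid `S` into itself exactly when `g ∈ S`. The left regular representation does the rest.
-/

open Set Topology

namespace TopologicalSpace

variable {X Y : Type*}

abbrev supersetTopology (S : Set X) : TopologicalSpace X where
  IsOpen U := U.Nonempty → S ⊆ U
  isOpen_univ _ := subset_univ S
  isOpen_inter _ _ hU hV := fun ⟨x, hxU, hxV⟩ => subset_inter (hU ⟨x, hxU⟩) (hV ⟨x, hxV⟩)
  isOpen_sUnion _ h𝒰 := fun ⟨x, U, hU, hxU⟩ => (h𝒰 U hU ⟨x, hxU⟩).trans (subset_sUnion_of_mem hU)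

theorem continuous_supersetTopology_of_mapsTo {S : Set X} {T : Set Y} {f : X → Y}
    (hf : MapsTo f S T) : Continuous[supersetTopology S, supersetTopology T] f := by
  refine continuous_def.2 fun U hU hne => hf.mono_right (hU ?_)
  exact (hne.image f).mono (image_preimage_subset f U)

theorem mapsTo_of_continuous_supersetTopology {S : Set X} {T : Set Y} {f : X → Y}
    (hf : Continuous[supersetTopology S, supersetTopology T] f) (hne : (f ⁻¹' T).Nonempty) :
    MapsTo f S T :=
  (continuous_def.1 hf T fun _ => subset_rfl) hne

theorem continuous_supersetTopology_iff_mapsTo {S : Set X} {T : Set Y} {f : X → Y}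
    (hf : Function.Surjective f) (hT : T.Nonempty) :
    Continuous[supersetTopology S, supersetTopology T] f ↔ MapsTo f S T :=
  ⟨fun hc => mapsTo_of_continuous_supersetTopology hc (hT.preimage hf),
    continuous_supersetTopology_of_mapsTo⟩

end TopologicalSpace

theorem Submonoid.mapsTo_mul_left_iff {M : Type*} [Monoid M] (S : Submonoid M) (g : M) :
    MapsTo (g * ·) S S ↔ g ∈ S :=
  ⟨fun h => by simpa using h S.one_mem, fun hg _ hx => S.mul_mem hg hx⟩

theorem stmt_7 {G : Type u} [Group G] (S : Submonoid G) :
    ∃ (X : Type u) (_ : TopologicalSpace X) (φ : G →* Equiv.Perm X),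
      Function.Injective φ ∧ ∀ g : G, Continuous ⇑(φ g) ↔ g ∈ S := by
  refine ⟨G, TopologicalSpace.supersetTopology S, MulAction.toPermHom G G,
    MulAction.toPerm_injective, fun g => ?_⟩
  rw [← S.mapsTo_mul_left_iff]
  exact TopologicalSpace.continuous_supersetTopology_iff_mapsTo (MulAction.surjective g)
    ⟨1, S.one_mem⟩
end

section
/- Let M be a monoid and S a submonoid of M. Then there exist a topological space X and an injective monoid homomorphism φ : M → M(X), where M(X) is the monoid of all maps X → X under composition, such that for every m ∈ M, the map φ(m) is continuous if and only if m ∈ S. -/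
/-!
Let `M` act on `X = Option M` by left multiplication on `some _`, fixing `none`, and take
`x₀ = some 1`. Declare `U` open when every `s ∈ S` that maps some point into `U` also maps `x₀`
into `U`. This is a topology, and `S` acts continuously because it is closed under
multiplication. If `m ∉ S`, then `m • x₀ = some m` lies outside the orbit `S • x₀`, so the
complement of `{m • x₀}` is open; its preimage under `m • ·` contains `none` but not `x₀`, so it
is not open.
-/

open Topology

namespace Submonoid

variable {M X : Type*} [Monoid M] [MulAction M X] (S : Submonoid M) (x₀ : X)

abbrev basepointTopology : TopologicalSpace X where
  IsOpen U := ∀ s ∈ S, ∀ x, s • x ∈ U → s • x₀ ∈ U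
  isOpen_univ _ _ _ _ := trivial
  isOpen_inter _ _ hU hV s hs x hx := ⟨hU s hs x hx.1, hV s hs x hx.2⟩
  isOpen_sUnion _ h s hs x := fun ⟨U, hU, hxU⟩ => ⟨U, hU, h U hU s hs x hxU⟩

variable {S x₀}

theorem continuous_smul_basepointTopology {m : M} (hm : m ∈ S) :
    Continuous[basepointTopology S x₀, basepointTopology S x₀] (m • · : X → X) := by
  rw [continuous_def]
  intro U hU s hs x hx
  simp only [Set.mem_preimage, smul_smul] at hx ⊢
  exact hU (m * s) (S.mul_mem hm hs) x hx

theorem mem_of_continuous_smul_basepointTopology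
    (hfree : Function.Injective (· • x₀ : M → X)) {m : M} {y : X} (hy : m • y ≠ m • x₀)
    (hcont : Continuous[basepointTopology S x₀, basepointTopology S x₀] (m • · : X → X)) :
    m ∈ S := by
  by_contra hm
  have hopen : IsOpen[basepointTopology S x₀] {m • x₀}ᶜ := fun s hs _ _ hsm =>
    hm (hfree hsm ▸ hs)
  exact continuous_def.1 hcont _ hopen 1 S.one_mem y (by simpa using hy) (by simp)

end Submonoid

theorem stmt_8 {M : Type u} [Monoid M] (S : Submonoid M) :
    ∃ (X : Type u) (_ : TopologicalSpace X) (φ : M →* Function.End X),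
      Function.Injective φ ∧ ∀ m : M, Continuous (φ m) ↔ m ∈ S := by
  have hfree : Function.Injective (· • some 1 : M → Option M) := fun m n h => by
    simpa using h
  refine ⟨Option M, S.basepointTopology (some 1), MulAction.toEndHom, ?_, fun m => ?_⟩
  · exact fun m n h => hfree (congrFun h (some 1))
  · exact ⟨Submonoid.mem_of_continuous_smul_basepointTopology hfree (y := none) (by simp),
      Submonoid.continuous_smul_basepointTopology⟩
end

section
/- Let G be a group and H a subgroup of G. Then there exist a compact Hausdorff topological space X and an injective group homomorphism φ : G → B(X) into the group of bijections of X such that for every g ∈ G, the bijection φ(g) is continuous if and only if g ∈ H. -/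
/-!
Let `G` act on `G × [0,1]` by left multiplication on the first factor, conjugated by the shear
`(x, t) ↦ (x, σₓ t)`, where `σₓ` is the identity for `x ∈ H` and the swap `0 ↔ 1` otherwise.
Elements of `H` preserve membership in `H`, so they still act by the homeomorphism
`(x, t) ↦ (g x, t)`; an element `g ∉ H` maps the fiber over `1` to the fiber over `g` through
the discontinuous swap. The one-point compactification of the locally compact Hausdorff space
`G × [0,1]` (with `G` discrete) turns this into the required compact Hausdorff space.
-/

open Filter Topology Function

theorem Equiv.not_continuous_swap {X : Type*} [TopologicalSpace X] [T2Space X] [DecidableEq X]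
    {x y : X} (hxy : x ≠ y) [(𝓝[≠] x).NeBot] : ¬ Continuous (Equiv.swap x y) := by
  intro h
  have h_to_y : Tendsto (Equiv.swap x y) (𝓝[≠] x) (𝓝 y) := by
    simpa using (h.tendsto x).mono_left nhdsWithin_le_nhds
  have h_eq_id : Equiv.swap x y =ᶠ[𝓝[≠] x] id := by
    filter_upwards [self_mem_nhdsWithin, nhdsWithin_le_nhds (eventually_ne_nhds hxy)]
      with z hzx hzy using Equiv.swap_apply_of_ne_of_ne hzx hzy
  exact hxy <| tendsto_nhds_unique
    ((tendsto_id.mono_left nhdsWithin_le_nhds).congr' h_eq_id.symm) h_to_y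

namespace OnePoint

variable (Y : Type*)

def permHom : Equiv.Perm Y →* Equiv.Perm (OnePoint Y) where
  toFun := Equiv.optionCongr
  map_one' := Equiv.optionCongr_refl
  map_mul' e f := Equiv.optionCongr_trans f e

theorem permHom_injective : Injective (permHom Y) :=
  Equiv.optionCongr_injective

variable {Y} [TopologicalSpace Y]

theorem continuous_of_continuous_permHom {e : Equiv.Perm Y}
    (h : Continuous (permHom Y e)) : Continuous e :=
  isOpenEmbedding_coe.isEmbedding.continuous_iff.mpr (h.comp continuous_coe)

theorem continuous_permHom_homeomorph (e : Y ≃ₜ Y) : Continuous (permHom Y e.toEquiv) :=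
  e.onePointCongr.continuous

end OnePoint

variable {G F : Type*} [Group G]

def leftMulFst : G →* Equiv.Perm (G × F) where
  toFun g := (Equiv.mulLeft g).prodCongr (Equiv.refl F)
  map_one' := by ext <;> simp
  map_mul' g h := by ext <;> simp [mul_assoc]

namespace Subgroup

variable (H : Subgroup G) (τ : Equiv.Perm F)

open Classical in
noncomputable def fiberTwist (x : G) : Equiv.Perm F := if x ∈ H then 1 else τ

theorem fiberTwist_of_mem {x : G} (hx : x ∈ H) : H.fiberTwist τ x = 1 := if_pos hx

theorem fiberTwist_of_notMem {x : G} (hx : x ∉ H) : H.fiberTwist τ x = τ := if_neg hx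

theorem fiberTwist_mul_of_mem {g : G} (hg : g ∈ H) (x : G) :
    H.fiberTwist τ (g * x) = H.fiberTwist τ x := by
  by_cases hx : x ∈ H
  · rw [fiberTwist_of_mem _ _ hx, fiberTwist_of_mem _ _ (H.mul_mem hg hx)]
  · rw [fiberTwist_of_notMem _ _ hx,
      fiberTwist_of_notMem _ _ (mt (H.mul_mem_cancel_left hg).mp hx)]

noncomputable def twistedAction : G →* Equiv.Perm (G × F) :=
  (MulAut.conj (Equiv.prodShear (Equiv.refl G) (H.fiberTwist τ))).toMonoidHom.comp leftMulFst

theorem twistedAction_apply (g x : G) (t : F) :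
    H.twistedAction τ g (x, t) = (g * x, H.fiberTwist τ (g * x) ((H.fiberTwist τ x).symm t)) :=
  rfl

theorem twistedAction_of_mem {g : G} (hg : g ∈ H) : H.twistedAction τ g = leftMulFst g := by
  ext ⟨x, t⟩ <;> simp [twistedAction_apply, fiberTwist_mul_of_mem _ _ hg, leftMulFst]

theorem twistedAction_one_fst (g : G) (t : F) :
    H.twistedAction τ g (1, t) = (g, H.fiberTwist τ g t) := by
  simp [twistedAction_apply, fiberTwist_of_mem _ _ H.one_mem, ← Equiv.Perm.inv_def]

theorem twistedAction_injective [Nonempty F] : Injective (H.twistedAction τ) := by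
  intro a b hab
  obtain ⟨t⟩ := ‹Nonempty F›
  simpa [twistedAction_one_fst] using congr_arg (fun e => (e (1, t)).1) hab

variable [TopologicalSpace G] [DiscreteTopology G] [TopologicalSpace F] {τ}

theorem continuous_permHom_twistedAction_iff (hτ : ¬ Continuous τ) (g : G) :
    Continuous (OnePoint.permHom _ (H.twistedAction τ g)) ↔ g ∈ H := by
  refine ⟨fun hc => by_contra fun hg => hτ ?_, fun hg => ?_⟩
  · have hψ := OnePoint.continuous_of_continuous_permHom hc
    simpa [twistedAction_one_fst, fiberTwist_of_notMem _ _ hg] using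
      (hψ.comp (Continuous.prodMk_right (1 : G))).snd
  · rw [twistedAction_of_mem _ _ hg]
    exact OnePoint.continuous_permHom_homeomorph
      ((Homeomorph.mulLeft g).prodCongr (Homeomorph.refl F))

end Subgroup

theorem stmt_9 {G : Type u} [Group G] (H : Subgroup G) :
    ∃ (X : Type u) (_ : TopologicalSpace X) (_ : CompactSpace X) (_ : T2Space X)
      (φ : G →* Equiv.Perm X),
      Function.Injective φ ∧ ∀ g : G, Continuous ⇑(φ g) ↔ g ∈ H := by
  let _ : TopologicalSpace G := ⊥
  have _ : DiscreteTopology G := ⟨rfl⟩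
  let τ : Equiv.Perm unitInterval := Equiv.swap 0 1
  exact ⟨OnePoint (G × unitInterval), inferInstance, inferInstance, inferInstance,
    (OnePoint.permHom _).comp (H.twistedAction τ),
    (OnePoint.permHom_injective _).comp (H.twistedAction_injective τ),
    H.continuous_permHom_twistedAction_iff (Equiv.not_continuous_swap (by simp))⟩
end

section
/- There is no topology on a three-element set X such that the set of continuous bijections of X forms a subgroup of the symmetric group on X of order exactly 3 (i.e., isomorphic to the cyclic group of order 3). -/
/-!
The continuous permutations of a finite space form a subgroup of the symmetric group (the inverse
of a permutation is one of its powers). A subgroup of order 3 of `Perm (Fin 3)` has index 2, so it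
is the alternating group and contains the 3-cycle `c = finRotate 3`. A topology for which `c` is
continuous is indiscrete or discrete: a nonempty proper open set `s` is a singleton or misses one
point, and then `s ∩ c⁻¹(s)` is a singleton; the translates of an open singleton under the powers
of `c` give all singletons. In both cases all six permutations are continuous.
-/

open Equiv Equiv.Perm
open scoped Topology

variable {X : Type*} [TopologicalSpace X]

namespace Equiv.Perm

theorem continuous_inv [Finite X] {f : Perm X} (hf : Continuous f) : Continuous ⇑f⁻¹ := by
  obtain ⟨n, hn⟩ : f⁻¹ ∈ Submonoid.powers f :=
    (isOfFinOrder_of_finite f).mem_powers_iff_mem_zpowers.mpr (Subgroup.inv_mem _ (by simp))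
  rw [← hn, coe_pow]
  exact hf.iterate n

theorem isOpen_singleton_of_pow_apply {f : Perm X} (hf : Continuous f) {x y : X} {n : ℕ}
    (hn : (f ^ n) y = x) (hx : IsOpen {x}) : IsOpen {y} := by
  have hy : ({y} : Set X) = ⇑(f ^ n) ⁻¹' {x} := by
    ext z
    simp [← hn]
  rw [hy, coe_pow]
  exact hx.preimage (hf.iterate n)

theorem discreteTopology_of_isCycle [Finite X] {f : Perm X} (hf : Continuous f) (hc : f.IsCycle)
    (hfix : ∀ x, f x ≠ x) {x : X} (hx : IsOpen {x}) : DiscreteTopology X := by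
  refine discreteTopology_iff_isOpen_singleton.mpr fun y ↦ ?_
  obtain ⟨n, hn⟩ := (hc.sameCycle (hfix y) (hfix x)).exists_nat_pow_eq
  exact isOpen_singleton_of_pow_apply hf hn hx

end Equiv.Perm

variable (X) in
def continuousPerms [Finite X] : Subgroup (Perm X) where
  carrier := {f | Continuous f}
  one_mem' := continuous_id
  mul_mem' hf hg := hf.comp hg
  inv_mem' := Perm.continuous_inv

theorem exists_singleton_eq_or_eq_filter_finRotate (s : Finset (Fin 3)) (hne : s.Nonempty)
    (hs : s ≠ Finset.univ) : ∃ x, {x} = s ∨ {x} = s.filter (fun y ↦ finRotate 3 y ∈ s) := by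
  decide +revert

theorem eq_bot_or_eq_top_of_continuous_finRotate {t : TopologicalSpace (Fin 3)}
    (h : Continuous[t, t] (finRotate 3)) : t = ⊥ ∨ t = ⊤ := by
  by_cases hprop : ∃ s : Finset (Fin 3), IsOpen[t] (s : Set (Fin 3)) ∧ s.Nonempty ∧ s ≠ .univ
  · obtain ⟨s, hso, hne, hs⟩ := hprop
    obtain ⟨x, hx⟩ : ∃ x, IsOpen[t] {x} := by
      obtain ⟨x, hxs | hxs⟩ := exists_singleton_eq_or_eq_filter_finRotate s hne hs
      · exact ⟨x, by rwa [← Finset.coe_singleton, hxs]⟩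
      · refine ⟨x, ?_⟩
        rw [← Finset.coe_singleton, hxs, Finset.coe_filter]
        exact hso.inter (hso.preimage h)
    have := discreteTopology_of_isCycle h (isCycle_finRotate (n := 1)) (by decide) hx
    exact .inl DiscreteTopology.eq_bot
  · refine .inr (eq_top_iff.mpr fun u hu ↦ ?_)
    lift u to Finset (Fin 3) using u.toFinite
    rw [TopologicalSpace.isOpen_top_iff]
    by_contra! hu'
    exact hprop ⟨u, hu, by simpa [Finset.nonempty_iff_ne_empty] using hu'⟩

theorem continuousPerms_eq_top_of_continuous_finRotate [t : TopologicalSpace (Fin 3)]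
    (h : Continuous (finRotate 3)) : continuousPerms (Fin 3) = ⊤ := by
  refine eq_top_iff.mpr fun f _ ↦ ?_
  rcases eq_bot_or_eq_top_of_continuous_finRotate h with rfl | rfl
  · exact continuous_bot
  · exact continuous_top

theorem stmt_15 (t : TopologicalSpace (Fin 3)) :
    Nat.card {f : Equiv.Perm (Fin 3) // @Continuous _ _ t t ⇑f} ≠ 3 := by
  change Nat.card (continuousPerms (Fin 3)) ≠ 3
  intro h3
  have hindex : (continuousPerms (Fin 3)).index = 2 := by
    have := (continuousPerms (Fin 3)).card_mul_index
    rw [h3, Nat.card_perm, Nat.card_fin] at this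
    change 3 * _ = 6 at this
    omega
  have hrot : finRotate 3 ∈ continuousPerms (Fin 3) :=
    eq_alternatingGroup_of_index_eq_two hindex ▸ finRotate_bit1_mem_alternatingGroup (n := 1)
  rw [continuousPerms_eq_top_of_continuous_finRotate hrot, Subgroup.card_top, Nat.card_perm,
    Nat.card_fin] at h3
  exact absurd h3 (by decide)
end
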